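/- Let M ∈ ℝ^{n×n} be symmetric positive definite, let W ∈ ℝ^{n×n} be a diagonal matrix with positive diagonal entries, let c > 0 be such that cW⁻¹ − M⁻¹ is positive semidefinite, let α > 0, let a ≤ b be reals and S = {z ∈ ℝ^n : a ≤ z_i ≤ b for all i}, and let p, μ⁰ ∈ ℝ^n. Define q = p + (cW⁻¹ − M⁻¹) μ⁰. Then μ̃ = (1/c) W (q − α Π_S(q/α)) is the unique minimizer over ℝ^n of the function μ ↦ δ*_S(μ) + (1/(2α))(μ − M p)ᵀ M⁻¹ (μ − M p) + (1/(2α))(μ − μ⁰)ᵀ (cW⁻¹ − M⁻¹)(μ − μ⁰). -/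

import Mathlib

open Matrix

/-- The support function `δ*_B(μ) = sup_{z ∈ B} ⟨μ, z⟩` of a set `B ⊆ ℝ^n`,
with values in `EReal`. -/
noncomputable def suppFn {n : ℕ} (B : Set (Fin n → ℝ)) (mu : Fin n → ℝ) : EReal :=
  ⨆ z : B, ((mu ⬝ᵥ (z : Fin n → ℝ) : ℝ) : EReal)

/-- The objective
`μ ↦ δ*_S(μ) + (1/(2α))(μ - Mp)ᵀ M⁻¹ (μ - Mp) + (1/(2α))(μ - μ⁰)ᵀ (cW⁻¹ - M⁻¹)(μ - μ⁰)`. -/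
noncomputable def objMu {n : ℕ} (M W : Matrix (Fin n) (Fin n) ℝ) (c α : ℝ)
    (S : Set (Fin n → ℝ)) (p mu0 mu : Fin n → ℝ) : EReal :=
  suppFn S mu +
    (((1 : ℝ)/(2*α) * ((mu - M *ᵥ p) ⬝ᵥ (M⁻¹ *ᵥ (mu - M *ᵥ p)))
      + (1 : ℝ)/(2*α) * ((mu - mu0) ⬝ᵥ ((c • W⁻¹ - M⁻¹) *ᵥ (mu - mu0))) : ℝ) : EReal)

/-!
Write the objective as `δ*_S + G` with `G` quadratic. The `M⁻¹` parts of the two quadratic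
terms cancel in the Hessian of `G`, which is `(1/α) c W⁻¹`, and the definition of `q` makes
`∇G(μ̃) = -P` for `P = Π_S(q/α)`. Since `S` is a box, the projection inequality for `P` holds
coordinatewise, and `μ̃` is a positive diagonal rescaling of `q/α - P`; hence `P` maximises
`⟨μ̃, ·⟩` on `S`, i.e. `δ*_S(μ̃) = ⟨μ̃, P⟩`. Together with `δ*_S(μ) ≥ ⟨μ, P⟩` this gives
`δ*_S(μ) + G(μ) ≥ δ*_S(μ̃) + G(μ̃) + (1/(2α)) (μ - μ̃)ᵀ c W⁻¹ (μ - μ̃)`,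
and `c W⁻¹` is positive definite.
-/

open Set

theorem mul_sub_nonpos_of_forall_sq_le {a b x p t : ℝ} (hp : p ∈ Icc a b)
    (hmin : ∀ s ∈ Icc a b, (x - p) ^ 2 ≤ (x - s) ^ 2) (ht : t ∈ Icc a b) :
    (x - p) * (t - p) ≤ 0 := by
  by_contra! h
  obtain ⟨hpa, hpb⟩ := hp
  obtain ⟨hta, htb⟩ := ht
  by_cases hx : x ∈ Icc a b
  · have hxp : x - p = 0 := pow_eq_zero_iff two_ne_zero |>.1 <|
      le_antisymm (by simpa using hmin x hx) (sq_nonneg _)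
    simp [hxp] at h
  · have := hmin t ⟨hta, htb⟩
    rw [mem_Icc, not_and_or, not_le, not_le] at hx
    rcases hx with hx | hx <;> nlinarith

section BoxProjection

variable {ι : Type*} [Fintype ι] {a b : ℝ} {x P : ι → ℝ}

theorem sq_sub_apply_le_of_proj_pi_Icc [DecidableEq ι] (hP : P ∈ univ.pi fun _ => Icc a b)
    (hproj : ∀ z ∈ univ.pi fun _ => Icc a b, (x - P) ⬝ᵥ (x - P) ≤ (x - z) ⬝ᵥ (x - z))
    (i : ι) {t : ℝ} (ht : t ∈ Icc a b) : (x i - P i) ^ 2 ≤ (x i - t) ^ 2 := by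
  have h := hproj (Function.update P i t) fun j _ => by
    rcases eq_or_ne j i with rfl | hj
    · simpa using ht
    · simpa [Function.update_of_ne hj] using hP j (mem_univ j)
  simp only [dotProduct, ← Finset.add_sum_erase _ _ (Finset.mem_univ i)] at h
  have hrest : ∑ j ∈ Finset.univ.erase i,
      (x - Function.update P i t) j * (x - Function.update P i t) j
        = ∑ j ∈ Finset.univ.erase i, (x - P) j * (x - P) j :=
    Finset.sum_congr rfl fun j hj => by
      simp only [Pi.sub_apply, Function.update_of_ne (Finset.ne_of_mem_erase hj)]
  rw [hrest, Pi.sub_apply, Pi.sub_apply, Function.update_self] at h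
  rw [sq, sq]
  linarith

theorem dotProduct_le_of_proj_pi_Icc (hP : P ∈ univ.pi fun _ => Icc a b)
    (hproj : ∀ z ∈ univ.pi fun _ => Icc a b, (x - P) ⬝ᵥ (x - P) ≤ (x - z) ⬝ᵥ (x - z))
    {w : ι → ℝ} (hw : 0 ≤ w) {z : ι → ℝ} (hz : z ∈ univ.pi fun _ => Icc a b) :
    (w * (x - P)) ⬝ᵥ z ≤ (w * (x - P)) ⬝ᵥ P := by
  classical
  rw [← sub_nonpos, ← dotProduct_sub]
  refine Finset.sum_nonpos fun i _ => ?_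
  have := mul_sub_nonpos_of_forall_sq_le (hP i (mem_univ i))
    (fun s hs => sq_sub_apply_le_of_proj_pi_Icc hP hproj i hs) (hz i (mem_univ i))
  simp only [Pi.mul_apply, Pi.sub_apply, mul_assoc]
  exact mul_nonpos_of_nonneg_of_nonpos (hw i) this

end BoxProjection

theorem dotProduct_le_suppFn {n : ℕ} {B : Set (Fin n → ℝ)} {z : Fin n → ℝ} (hz : z ∈ B)
    (mu : Fin n → ℝ) : ((mu ⬝ᵥ z : ℝ) : EReal) ≤ suppFn B mu :=
  le_iSup (fun z : B => ((mu ⬝ᵥ (z : Fin n → ℝ) : ℝ) : EReal)) ⟨z, hz⟩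

theorem suppFn_eq_dotProduct {n : ℕ} {B : Set (Fin n → ℝ)} {z mu : Fin n → ℝ} (hz : z ∈ B)
    (hmax : ∀ y ∈ B, mu ⬝ᵥ y ≤ mu ⬝ᵥ z) : suppFn B mu = ((mu ⬝ᵥ z : ℝ) : EReal) :=
  le_antisymm (iSup_le fun y => EReal.coe_le_coe_iff.2 (hmax y y.2)) (dotProduct_le_suppFn hz mu)

theorem Matrix.IsSymm.add_dotProduct_mulVec_add {ι R : Type*} [Fintype ι] [CommRing R]
    {N : Matrix ι ι R} (hN : N.IsSymm) (u d : ι → R) :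
    (u + d) ⬝ᵥ N *ᵥ (u + d) = u ⬝ᵥ N *ᵥ u + 2 * (d ⬝ᵥ N *ᵥ u) + d ⬝ᵥ N *ᵥ d := by
  have hcomm : u ⬝ᵥ N *ᵥ d = d ⬝ᵥ N *ᵥ u := by
    rw [dotProduct_mulVec, dotProduct_comm, ← mulVec_transpose, hN.eq]
  rw [mulVec_add, dotProduct_add, add_dotProduct, add_dotProduct, hcomm]
  ring

/-- `hgrad` says that the gradient of the quadratic part of `objMu` at `m` is `-P`. -/
theorem objMu_add_le {n : ℕ} {M W : Matrix (Fin n) (Fin n) ℝ} {c α : ℝ} {S : Set (Fin n → ℝ)}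
    {p mu0 m P : Fin n → ℝ} (hM : M⁻¹.IsSymm) (hW : W⁻¹.IsSymm) (hα : α ≠ 0) (hP : P ∈ S)
    (hsupp : suppFn S m = ((m ⬝ᵥ P : ℝ) : EReal))
    (hgrad : M⁻¹ *ᵥ (m - M *ᵥ p) + (c • W⁻¹ - M⁻¹) *ᵥ (m - mu0) = -(α • P)) (d : Fin n → ℝ) :
    objMu M W c α S p mu0 m + ((1 / (2 * α) * (d ⬝ᵥ (c • W⁻¹) *ᵥ d) : ℝ) : EReal)
      ≤ objMu M W c α S p mu0 (m + d) := by
  have hA : (c • W⁻¹ - M⁻¹).IsSymm := (hW.smul c).sub hM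
  have hcross : d ⬝ᵥ M⁻¹ *ᵥ (m - M *ᵥ p) + d ⬝ᵥ (c • W⁻¹ - M⁻¹) *ᵥ (m - mu0)
      = -α * (d ⬝ᵥ P) := by
    rw [← dotProduct_add, hgrad, dotProduct_neg, dotProduct_smul, smul_eq_mul, neg_mul]
  have hhess : d ⬝ᵥ M⁻¹ *ᵥ d + d ⬝ᵥ (c • W⁻¹ - M⁻¹) *ᵥ d = d ⬝ᵥ (c • W⁻¹) *ᵥ d := by
    rw [← dotProduct_add, ← add_mulVec, add_sub_cancel]
  have hk : 1 / (2 * α) * (2 * α) = 1 := by field_simp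
  unfold objMu
  rw [hsupp, add_sub_right_comm m d, add_sub_right_comm m d, hM.add_dotProduct_mulVec_add,
    hA.add_dotProduct_mulVec_add]
  calc _ = (((m + d) ⬝ᵥ P : ℝ) : EReal)
        + ((1 / (2 * α) * ((m - M *ᵥ p) ⬝ᵥ M⁻¹ *ᵥ (m - M *ᵥ p)
            + 2 * (d ⬝ᵥ M⁻¹ *ᵥ (m - M *ᵥ p)) + d ⬝ᵥ M⁻¹ *ᵥ d)
          + 1 / (2 * α) * ((m - mu0) ⬝ᵥ (c • W⁻¹ - M⁻¹) *ᵥ (m - mu0)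
            + 2 * (d ⬝ᵥ (c • W⁻¹ - M⁻¹) *ᵥ (m - mu0)) + d ⬝ᵥ (c • W⁻¹ - M⁻¹) *ᵥ d) : ℝ)
          : EReal) := by
        norm_cast
        rw [add_dotProduct]
        linear_combination (-2 / (2 * α)) * hcross - 1 / (2 * α) * hhess + (d ⬝ᵥ P) * hk
    _ ≤ _ := by gcongr; exact dotProduct_le_suppFn hP _

theorem closed_form_gradient_eq {ι K : Type*} [Fintype ι] [DecidableEq ι] [Field K]
    {M W : Matrix ι ι K} {c α : K} {p mu0 q P muTil : ι → K}
    (hM : IsUnit M.det) (hW : IsUnit W.det) (hc : c ≠ 0)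
    (hq : q = p + (c • W⁻¹ - M⁻¹) *ᵥ mu0) (hmut : muTil = (1 / c) • (W *ᵥ (q - α • P))) :
    M⁻¹ *ᵥ (muTil - M *ᵥ p) + (c • W⁻¹ - M⁻¹) *ᵥ (muTil - mu0) = -(α • P) := by
  have hDmu : (c • W⁻¹) *ᵥ muTil = q - α • P := by
    rw [hmut, smul_mulVec, mulVec_smul, smul_smul, mul_one_div_cancel hc, one_smul,
      mulVec_mulVec, nonsing_inv_mul W hW, one_mulVec]
  rw [mulVec_sub, mulVec_sub, mulVec_mulVec, nonsing_inv_mul M hM, one_mulVec, sub_mulVec,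
    hDmu, hq]
  abel

theorem forall_le_and_eq_of_add_quadratic_le {ι : Type*} [Fintype ι] {f : (ι → ℝ) → EReal}
    {m : ι → ℝ} {r : ℝ} {D : Matrix ι ι ℝ} (hr : 0 < r) (hD : D.PosDef)
    (hfin : ∃ v : ℝ, f m = v) (h : ∀ μ, f m + ((r * ((μ - m) ⬝ᵥ D *ᵥ (μ - m)) : ℝ) : EReal) ≤ f μ) :
    (∀ μ, f m ≤ f μ) ∧ ∀ μ, (∀ μ', f μ ≤ f μ') → μ = m := by
  refine ⟨fun μ => (le_add_of_nonneg_right ?_).trans (h μ), fun μ hmin => ?_⟩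
  · exact EReal.coe_nonneg.2 <| mul_nonneg hr.le <| by
      simpa using hD.posSemidef.dotProduct_mulVec_nonneg (μ - m)
  · by_contra hne
    have hpos : 0 < r * ((μ - m) ⬝ᵥ D *ᵥ (μ - m)) :=
      mul_pos hr (by simpa using hD.dotProduct_mulVec_pos (sub_ne_zero.2 hne))
    obtain ⟨v, hv⟩ := hfin
    have hle := (h μ).trans (hmin m)
    rw [hv, ← EReal.coe_add, EReal.coe_le_coe_iff] at hle
    linarith

theorem mu_subproblem_closed_form_general {n : ℕ}
    (M : Matrix (Fin n) (Fin n) ℝ) (hM : M.PosDef)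
    (W : Matrix (Fin n) (Fin n) ℝ) (hWdiag : ∀ i j, i ≠ j → W i j = 0)
    (hWpos : ∀ i, 0 < W i i)
    (c : ℝ) (hc : 0 < c)
    (α : ℝ) (hα : 0 < α)
    (a b : ℝ)
    (S : Set (Fin n → ℝ)) (hS : S = {z : Fin n → ℝ | ∀ i, a ≤ z i ∧ z i ≤ b})
    (p mu0 q : Fin n → ℝ)
    (hq : q = p + (c • W⁻¹ - M⁻¹) *ᵥ mu0)
    -- `P = Π_S(q/α)`, the Euclidean projection of `q/α` onto `S`:
    (P : Fin n → ℝ) (hPmem : P ∈ S)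
    (hPproj : ∀ z ∈ S, ((1/α) • q - P) ⬝ᵥ ((1/α) • q - P) ≤ ((1/α) • q - z) ⬝ᵥ ((1/α) • q - z))
    (muTil : Fin n → ℝ) (hmut : muTil = (1/c) • (W *ᵥ (q - α • P))) :
    (∀ mu : Fin n → ℝ, objMu M W c α S p mu0 muTil ≤ objMu M W c α S p mu0 mu) ∧
    (∀ mu : Fin n → ℝ, (∀ mu' : Fin n → ℝ, objMu M W c α S p mu0 mu ≤ objMu M W c α S p mu0 mu')
      → mu = muTil) := by
  have hbox : S = univ.pi fun _ => Icc a b := by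
    rw [hS]
    ext z
    simp only [mem_ofPred_eq, mem_univ_pi, mem_Icc]
  have hWdiagonal : W = diagonal W.diag := (IsDiag.diagonal_diag fun i j h => hWdiag i j h).symm
  have hW : W.PosDef := hWdiagonal ▸ posDef_diagonal_iff.2 hWpos
  have hmut_scaled : muTil = ((α / c) • W.diag) * ((1 / α) • q - P) := by
    ext i
    rw [hmut, Pi.smul_apply, hWdiagonal, mulVec_diagonal]
    simp only [Pi.smul_apply, Pi.mul_apply, Pi.sub_apply, smul_eq_mul, diag_diagonal]
    field_simp
  have hsupp : suppFn S muTil = ((muTil ⬝ᵥ P : ℝ) : EReal) := suppFn_eq_dotProduct hPmem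
    fun z hz => hmut_scaled ▸ dotProduct_le_of_proj_pi_Icc (hbox ▸ hPmem) (hbox ▸ hPproj)
      (fun i => (mul_pos (div_pos hα hc) (hWpos i)).le) (hbox ▸ hz)
  have hgrad := closed_form_gradient_eq ((isUnit_iff_isUnit_det M).1 hM.isUnit)
    ((isUnit_iff_isUnit_det W).1 hW.isUnit) hc.ne' hq hmut
  refine forall_le_and_eq_of_add_quadratic_le (r := 1 / (2 * α)) (by positivity) (hW.inv.smul hc)
    ⟨_, by rw [objMu, hsupp, ← EReal.coe_add]⟩ fun mu => ?_
  simpa only [add_sub_cancel] using objMu_add_le (isHermitian_iff_isSymm.1 hM.inv.1)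
    (isHermitian_iff_isSymm.1 hW.inv.1) hα.ne' hPmem hsupp hgrad (mu - muTil)

/-- The μ-subproblem has the closed form solution `μ̃ = (1/c) W (q - α Π_S(q/α))`. -/
theorem mu_subproblem_closed_form {n : ℕ}
    (M : Matrix (Fin n) (Fin n) ℝ) (hM : M.PosDef)
    (W : Matrix (Fin n) (Fin n) ℝ) (hWdiag : ∀ i j, i ≠ j → W i j = 0)
    (hWpos : ∀ i, 0 < W i i)
    (c : ℝ) (hc : 0 < c) (hcW : (c • W⁻¹ - M⁻¹).PosSemidef)
    (α : ℝ) (hα : 0 < α)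
    (a b : ℝ) (hab : a ≤ b)
    (S : Set (Fin n → ℝ)) (hS : S = {z : Fin n → ℝ | ∀ i, a ≤ z i ∧ z i ≤ b})
    (p mu0 q : Fin n → ℝ)
    (hq : q = p + (c • W⁻¹ - M⁻¹) *ᵥ mu0)
    -- `P = Π_S(q/α)`, the Euclidean projection of `q/α` onto `S`:
    (P : Fin n → ℝ) (hPmem : P ∈ S)
    (hPproj : ∀ z ∈ S, ((1/α) • q - P) ⬝ᵥ ((1/α) • q - P) ≤ ((1/α) • q - z) ⬝ᵥ ((1/α) • q - z))
    (muTil : Fin n → ℝ) (hmut : muTil = (1/c) • (W *ᵥ (q - α • P))) :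
    (∀ mu : Fin n → ℝ, objMu M W c α S p mu0 muTil ≤ objMu M W c α S p mu0 mu) ∧
    (∀ mu : Fin n → ℝ, (∀ mu' : Fin n → ℝ, objMu M W c α S p mu0 mu ≤ objMu M W c α S p mu0 mu')
      → mu = muTil) :=
  mu_subproblem_closed_form_general M hM W hWdiag hWpos c hc α hα a b S hS p mu0 q hq P hPmem hPproj
    muTil hmut
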